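/- If u satisfies u' = r(u−a)(u−b) and v satisfies v' = r·v·(u − (a+b)/2 + d), then v^(n)(z) = v(z) · (r^n / 2^n) · Σ_{k=0}^{n} C(n,k) (2d)^k Q_{n−k}(u; a, b), where Q_m(u; a, b) = Σ_{k=1}^{m+1} M_{m+1,k} (u−a)^{m+1−k} (u−b)^{k−1}. -/

import Mathlib

/-!
Every derivative of `v` has the form `v · P(u)` with `P` a polynomial, and differentiating
`v · P(u)` replaces `P` by `T P = g P + h P'`, where `v' = v · g(u)` and `u' = h(u)`. Writing
`x = u - a`, `y = u - b`, one has `T = (r/2) (2d + L)` with `L p = (x + y) p + 2xy p'`, and the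
MacMahon recurrence says precisely that `L^m 1 = Q_m`. As the scalar `2d` commutes with `L`, the
binomial theorem expands `T^n 1`.
-/

open scoped BigOperators
open MeasureTheory

/-- MacMahon numbers `M n k`: `M n 1 = 1`, `M n k = 0` outside `1 ≤ k ≤ n`, and
`M n k = (2k−1) M (n−1) k + (2n−2k+1) M (n−1) (k−1)`. -/
def macmahon : ℕ → ℕ → ℕ
  | 0, _ => 0
  | 1, 1 => 1
  | 1, _ => 0
  | n + 2, 0 => 0
  | n + 2, k + 1 =>
      (2 * k + 1) * macmahon (n + 1) (k + 1) +
        (2 * (n + 2) - 2 * (k + 1) + 1) * macmahon (n + 1) k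

/-- Derivative polynomial `Q_m(u;a,b) = Σ_{k=1}^{m+1} M_{m+1,k} (u-a)^(m+1-k) (u-b)^(k-1)`,
here as a function of the value `u : ℂ`. -/
noncomputable def Q (m : ℕ) (a b u : ℂ) : ℂ :=
  ∑ k ∈ Finset.Icc 1 (m + 1), (macmahon (m + 1) k : ℂ) * (u - a) ^ (m + 1 - k) * (u - b) ^ (k - 1)

open Polynomial Finset

lemma macmahon_zero_right (n : ℕ) : macmahon n 0 = 0 := by
  rcases n with _ | _ | _ <;> rfl

lemma macmahon_eq_zero_of_lt : ∀ {n k : ℕ}, n < k → macmahon n k = 0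
  | 0, _, _ => rfl
  | 1, k + 2, _ => rfl
  | n + 2, k + 1, h => by
    rw [macmahon, macmahon_eq_zero_of_lt (by omega : n + 1 < k + 1),
      macmahon_eq_zero_of_lt (by omega : n + 1 < k), mul_zero, mul_zero, add_zero]

section MacMahonSum

variable {A : Type*} [CommRing A]

lemma cast_macmahon_add_two_succ (n k : ℕ) (hk : k ≤ n + 1) :
    (macmahon (n + 2) (k + 1) : A) = (2 * k + 1) * macmahon (n + 1) (k + 1) +
      (2 * (n + 1 - k : ℕ) + 1) * macmahon (n + 1) k := by
  rw [macmahon, show 2 * (n + 2) - 2 * (k + 1) + 1 = 2 * (n + 1 - k) + 1 by omega]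
  push_cast
  ring

def macmahonSum (m : ℕ) (x y : A) : A :=
  ∑ k ∈ range (m + 1), (macmahon (m + 1) (k + 1) : A) * x ^ (m - k) * y ^ k

lemma Q_eq_macmahonSum (m : ℕ) (a b t : ℂ) : Q m a b t = macmahonSum m (t - a) (t - b) := by
  rw [Q, macmahonSum, ← Ico_add_one_right_eq_Icc, sum_Ico_eq_sum_range, Nat.add_sub_cancel]
  refine sum_congr rfl fun k _ => ?_
  rw [add_comm 1 k, show m + 1 - (k + 1) = m - k by omega, Nat.add_sub_cancel]

lemma map_macmahonSum {B : Type*} [CommRing B] (f : A →+* B) (m : ℕ) (x y : A) :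
    f (macmahonSum m x y) = macmahonSum m (f x) (f y) := by
  simp [macmahonSum]

lemma macmahonSum_zero (x y : A) : macmahonSum 0 x y = 1 := by
  simp [macmahonSum, show macmahon 1 1 = 1 from rfl]

lemma macmahonSum_succ (m : ℕ) (x y : A) : macmahonSum (m + 1) x y =
    ∑ k ∈ range (m + 1), (macmahon (m + 1) (k + 1) : A) *
      ((2 * k + 1) * x ^ (m - k + 1) * y ^ k + (2 * (m - k : ℕ) + 1) * x ^ (m - k) * y ^ (k + 1)) := by
  have split : ∀ k ∈ range (m + 2), (macmahon (m + 2) (k + 1) : A) * x ^ (m + 1 - k) * y ^ k =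
      (2 * k + 1) * macmahon (m + 1) (k + 1) * x ^ (m + 1 - k) * y ^ k +
        (2 * (m + 1 - k : ℕ) + 1) * macmahon (m + 1) k * x ^ (m + 1 - k) * y ^ k := by
    intro k hk
    rw [cast_macmahon_add_two_succ m k (by simpa [Nat.lt_succ_iff] using hk)]
    ring
  have drop_top : ∑ k ∈ range (m + 2),
      (2 * k + 1 : A) * macmahon (m + 1) (k + 1) * x ^ (m + 1 - k) * y ^ k =
      ∑ k ∈ range (m + 1), (2 * k + 1 : A) * macmahon (m + 1) (k + 1) * x ^ (m + 1 - k) * y ^ k := by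
    rw [sum_range_succ, macmahon_eq_zero_of_lt (by omega : m + 1 < m + 1 + 1)]
    simp
  have drop_bot : ∑ k ∈ range (m + 2),
      (2 * (m + 1 - k : ℕ) + 1 : A) * macmahon (m + 1) k * x ^ (m + 1 - k) * y ^ k =
      ∑ k ∈ range (m + 1), (2 * (m - k : ℕ) + 1 : A) * macmahon (m + 1) (k + 1) * x ^ (m - k) *
        y ^ (k + 1) := by
    rw [sum_range_succ', macmahon_zero_right]
    simp
  rw [macmahonSum, sum_congr rfl split, sum_add_distrib, drop_top, drop_bot, ← sum_add_distrib]
  refine sum_congr rfl fun k hk => ?_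
  rw [show m + 1 - k = m - k + 1 by simp at hk; omega]
  ring

end MacMahonSum

section FirstOrderOp

variable {R : Type*} [CommRing R]

noncomputable def firstOrderOp (g h : R[X]) : R[X] →ₗ[R] R[X] :=
  LinearMap.mulLeft R g + LinearMap.mulLeft R h ∘ₗ derivative

lemma firstOrderOp_apply (g h p : R[X]) : firstOrderOp g h p = g * p + h * derivative p := rfl

lemma firstOrderOp_C_mul (c : R) (g h : R[X]) :
    firstOrderOp (C c * g) (C c * h) = c • firstOrderOp g h := by
  refine LinearMap.ext fun p => ?_
  simp only [firstOrderOp_apply, LinearMap.smul_apply, smul_eq_C_mul]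
  ring

lemma firstOrderOp_add_C (g h : R[X]) (e : R) :
    firstOrderOp (g + C e) h = algebraMap R (Module.End R R[X]) e + firstOrderOp g h := by
  refine LinearMap.ext fun p => ?_
  simp only [firstOrderOp_apply, LinearMap.add_apply, Module.algebraMap_end_apply, smul_eq_C_mul]
  ring

lemma mul_derivative_pow_of_derivative_eq_one {x : R[X]} (hx : derivative x = 1) (i : ℕ) :
    x * derivative (x ^ i) = i * x ^ i := by
  rcases i with _ | i
  · simp
  · simp only [derivative_pow, hx, map_natCast, Nat.add_sub_cancel]
    ring

lemma firstOrderOp_natCast_mul_pow_mul_pow {x y : R[X]} (hx : derivative x = 1)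
    (hy : derivative y = 1) (n i j : ℕ) :
    firstOrderOp (x + y) (2 * x * y) (n * x ^ i * y ^ j) =
      n * ((2 * j + 1) * x ^ (i + 1) * y ^ j + (2 * i + 1) * x ^ i * y ^ (j + 1)) := by
  simp only [firstOrderOp_apply, derivative_mul, derivative_natCast]
  linear_combination (2 * n * y ^ (j + 1)) * mul_derivative_pow_of_derivative_eq_one hx i +
    (2 * n * x ^ (i + 1)) * mul_derivative_pow_of_derivative_eq_one hy j

lemma firstOrderOp_pow_one {x y : R[X]} (hx : derivative x = 1) (hy : derivative y = 1) (m : ℕ) :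
    (firstOrderOp (x + y) (2 * x * y) ^ m) 1 = macmahonSum m x y := by
  induction m with
  | zero => simp [macmahonSum_zero]
  | succ m ih =>
    rw [pow_succ', Module.End.mul_apply, ih, macmahonSum, map_sum, macmahonSum_succ]
    exact sum_congr rfl fun k _ => firstOrderOp_natCast_mul_pow_mul_pow hx hy _ _ _

lemma eval_firstOrderOp_pow_one (a b t : ℂ) (m : ℕ) :
    ((firstOrderOp (X - C a + (X - C b)) (2 * (X - C a) * (X - C b)) ^ m) 1).eval t =
      Q m a b t := by
  rw [firstOrderOp_pow_one (by simp) (by simp), ← coe_evalRingHom, map_macmahonSum,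
    Q_eq_macmahonSum]
  simp

end FirstOrderOp

lemma algebraMap_add_pow_apply {R M : Type*} [CommSemiring R] [AddCommMonoid M] [Module R M]
    (c : R) (L : Module.End R M) (n : ℕ) (m : M) :
    ((algebraMap R (Module.End R M) c + L) ^ n) m =
      ∑ k ∈ range (n + 1), (n.choose k * c ^ k) • (L ^ (n - k)) m := by
  rw [(Algebra.commute_algebraMap_left c L).add_pow, LinearMap.sum_apply]
  refine sum_congr rfl fun k _ => ?_
  rw [← map_pow, Module.End.mul_apply, Module.End.mul_apply, Module.End.natCast_apply,
    Module.algebraMap_end_apply, map_nsmul, smul_comm, mul_smul, Nat.cast_smul_eq_nsmul]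

section Riccati

variable {𝕜 : Type*} [NontriviallyNormedField 𝕜] {g h : 𝕜[X]} {u v : 𝕜 → 𝕜}

lemma hasDerivAt_mul_eval_comp {z : 𝕜} (hu : HasDerivAt u (h.eval (u z)) z)
    (hv : HasDerivAt v (v z * g.eval (u z)) z) (p : 𝕜[X]) :
    HasDerivAt (fun t => v t * p.eval (u t)) (v z * (firstOrderOp g h p).eval (u z)) z := by
  refine (hv.fun_mul ((p.hasDerivAt (u z)).comp z hu)).congr_deriv ?_
  simp only [firstOrderOp_apply, eval_add, eval_mul, Function.comp_apply]
  ring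

lemma iteratedDerivWithin_eq_mul_eval_comp {D : Set 𝕜} (hD : IsOpen D)
    (hu : ∀ z ∈ D, HasDerivAt u (h.eval (u z)) z)
    (hv : ∀ z ∈ D, HasDerivAt v (v z * g.eval (u z)) z) (n : ℕ) :
    ∀ z ∈ D, iteratedDerivWithin n v D z = v z * ((firstOrderOp g h ^ n) 1).eval (u z) := by
  induction n with
  | zero => intro z _; simp
  | succ n ih =>
    intro z hz
    rw [iteratedDerivWithin_succ, derivWithin_congr ih (ih z hz), derivWithin_of_isOpen hD hz,
      pow_succ', Module.End.mul_apply]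
    exact (hasDerivAt_mul_eval_comp (hu z hz) (hv z hz) _).deriv

end Riccati

theorem riccati_v_shifted_iterated_deriv_general
    (D : Set ℂ) (hD : IsOpen D) (r a b d : ℂ)
    (u v : ℂ → ℂ)
    (hu : ∀ z ∈ D, HasDerivAt u (r * (u z - a) * (u z - b)) z)
    (hv : ∀ z ∈ D, HasDerivAt v (r * v z * (u z - (a + b) / 2 + d)) z)
    (n : ℕ) (z : ℂ) (hz : z ∈ D) :
    iteratedDerivWithin n v D z =
      v z * (r ^ n / 2 ^ n) * ∑ k ∈ Finset.range (n + 1),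
        (n.choose k : ℂ) * (2 * d) ^ k * Q (n - k) a b (u z) := by
  set x : ℂ[X] := X - C a
  set y : ℂ[X] := X - C b
  have hu' : ∀ z ∈ D, HasDerivAt u ((C (r / 2) * (2 * x * y)).eval (u z)) z := fun z hz =>
    (hu z hz).congr_deriv (by simp [x, y]; ring)
  have hv' : ∀ z ∈ D, HasDerivAt v (v z * (C (r / 2) * (x + y + C (2 * d))).eval (u z)) z :=
    fun z hz => (hv z hz).congr_deriv (by simp [x, y]; ring)
  have hT : firstOrderOp (C (r / 2) * (x + y + C (2 * d))) (C (r / 2) * (2 * x * y)) =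
      (r / 2) • (algebraMap ℂ _ (2 * d) + firstOrderOp (x + y) (2 * x * y)) := by
    rw [firstOrderOp_C_mul, firstOrderOp_add_C]
  rw [iteratedDerivWithin_eq_mul_eval_comp hD hu' hv' n z hz, hT, _root_.smul_pow,
    LinearMap.smul_apply, algebraMap_add_pow_apply, eval_smul, eval_finsetSum, smul_eq_mul,
    div_pow, ← mul_assoc (v z)]
  congr 1
  refine sum_congr rfl fun k _ => ?_
  rw [eval_smul, eval_firstOrderOp_pow_one, smul_eq_mul]

theorem riccati_v_shifted_iterated_deriv
    (D : Set ℂ) (hD : IsOpen D) (r a b d : ℂ) (hr : r ≠ 0) (hab : a ≠ b)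
    (u v : ℂ → ℂ)
    (hu : ∀ z ∈ D, HasDerivAt u (r * (u z - a) * (u z - b)) z)
    (hv : ∀ z ∈ D, HasDerivAt v (r * v z * (u z - (a + b) / 2 + d)) z)
    (n : ℕ) (z : ℂ) (hz : z ∈ D) :
    iteratedDerivWithin n v D z =
      v z * (r ^ n / 2 ^ n) * ∑ k ∈ Finset.range (n + 1),
        (n.choose k : ℂ) * (2 * d) ^ k * Q (n - k) a b (u z) :=
  riccati_v_shifted_iterated_deriv_general D hD r a b d u v hu hv n z hz
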